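/- arXiv:1709.00238 — 2 statements merged into one kernel-verified Lean document; each statement's English description precedes it below -/
import Mathlib

section
/- With F the Friedrichs operator on A²(𝔻*, |z|²) as above, there exists for each p ∈ [2, 4) a constant C_p such that ‖F(g)‖_{L^p(𝔻*, |z|² dA)} ≤ C_p ∫_{𝔻*} |g(z)| |z|² dA(z) for all g ∈ A²(𝔻*, |z|²); in particular F maps A²(𝔻*, |z|²) boundedly into A^p(𝔻*, |z|²). -/
/-!
Averaging `g(z) z⁻ᵏ` over the circle `|z| = r` isolates the Laurent coefficient:
`2π rᵏ |a_k| ≤ ∫ |g(r e^{iθ})| dθ`. Integrating against `r³ dr` over `(0, 1)` and using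
`rᵏ ≥ r` for `k ≤ 1` gives `|a_k| ≤ (5 / 2π) ∫_{𝔻*} |g| |z|² dA ≤ ∫_{𝔻*} |g| |z|² dA =: M`.
Hence `|F(g)(z)| ≤ 3M / |z|` on `𝔻*`, and `∫_{𝔻*} |z|^{-p} |z|² dA = 2π / (4 - p)` is finite
exactly for `p < 4`.
-/

open MeasureTheory Complex Real Set

def puncturedUnitDisc : Set ℂ := {z : ℂ | 0 < ‖z‖ ∧ ‖z‖ < 1}

theorem isOpen_puncturedUnitDisc : IsOpen puncturedUnitDisc :=
  (isOpen_lt continuous_const continuous_norm).inter (isOpen_lt continuous_norm continuous_const)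

theorem norm_ofReal_mul_exp_mul_I {r : ℝ} (hr : 0 ≤ r) (θ : ℝ) : ‖(r : ℂ) * cexp (θ * I)‖ = r := by
  rw [norm_mul, norm_exp_ofReal_mul_I, mul_one, norm_real, Real.norm_of_nonneg hr]

theorem ofReal_mul_exp_mem_puncturedUnitDisc_iff {r : ℝ} (hr : 0 < r) (θ : ℝ) :
    r * cexp (θ * I) ∈ puncturedUnitDisc ↔ r < 1 := by
  simp only [puncturedUnitDisc, mem_ofPred_eq, norm_ofReal_mul_exp_mul_I hr.le, hr, true_and]

theorem lintegral_eq_lintegral_polar {f : ℂ → ENNReal} (hf : Measurable f) :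
    ∫⁻ z, f z = ∫⁻ r in Ioi 0, ∫⁻ θ in Ioo (-π) π, ENNReal.ofReal r * f (r * cexp (θ * I)) := by
  have hsymm : ∀ p : ℝ × ℝ, Complex.polarCoord.symm p = p.1 * cexp (p.2 * I) := fun p ↦ by
    rw [Complex.polarCoord_symm_apply, exp_mul_I]
    push_cast
    ring
  rw [← Complex.lintegral_comp_polarCoord_symm, polarCoord_target, Measure.volume_eq_prod,
    setLIntegral_prod]
  · simp [hsymm]
  · simp only [hsymm]
    fun_prop

theorem setLIntegral_puncturedUnitDisc {f : ℂ → ENNReal}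
    (hf : Measurable (puncturedUnitDisc.indicator f)) :
    ∫⁻ z in puncturedUnitDisc, f z =
      ∫⁻ r in Ioo 0 1, ∫⁻ θ in Ioo (-π) π, ENNReal.ofReal r * f (r * cexp (θ * I)) := by
  rw [← lintegral_indicator isOpen_puncturedUnitDisc.measurableSet, lintegral_eq_lintegral_polar hf,
    show Ioo (0 : ℝ) 1 = Iio 1 ∩ Ioi 0 by rw [inter_comm, Ioi_inter_Iio],
    ← Measure.restrict_restrict measurableSet_Iio, ← lintegral_indicator measurableSet_Iio]
  refine setLIntegral_congr_fun measurableSet_Ioi fun r (hr : 0 < r) ↦ ?_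
  have hmem := ofReal_mul_exp_mem_puncturedUnitDisc_iff hr
  by_cases hr1 : r ∈ Iio 1
  · simp only [indicator_of_mem hr1, indicator_of_mem ((hmem _).2 hr1)]
  · simp only [indicator_of_notMem hr1, indicator_of_notMem (mt (hmem _).1 hr1), mul_zero,
      lintegral_zero]

theorem lintegral_Ioo_zero_one_rpow {s : ℝ} (hs : -1 < s) :
    ∫⁻ r in Ioo (0 : ℝ) 1, ENNReal.ofReal (r ^ s) = ENNReal.ofReal (1 / (s + 1)) := by
  rw [← ofReal_integral_eq_lintegral_ofReal, ← integral_Ioc_eq_integral_Ioo,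
    ← intervalIntegral.integral_of_le zero_le_one, integral_rpow (Or.inl hs),
    one_rpow, zero_rpow (by linarith), sub_zero]
  · exact (intervalIntegral.intervalIntegrable_rpow' hs).1.mono_set Ioo_subset_Ioc_self
  · exact (ae_restrict_iff' measurableSet_Ioo).mpr (.of_forall fun r hr ↦ rpow_nonneg hr.1.le s)

theorem setLIntegral_puncturedUnitDisc_norm_rpow {q : ℝ} (hq : -2 < q) :
    ∫⁻ z in puncturedUnitDisc, ENNReal.ofReal (‖z‖ ^ q) = ENNReal.ofReal (2 * π / (q + 2)) := by
  have hmeas : Measurable fun z : ℂ ↦ ENNReal.ofReal (‖z‖ ^ q) := by fun_prop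
  rw [setLIntegral_puncturedUnitDisc (hmeas.indicator isOpen_puncturedUnitDisc.measurableSet)]
  calc ∫⁻ r in Ioo (0 : ℝ) 1, ∫⁻ θ in Ioo (-π) π,
        ENNReal.ofReal r * ENNReal.ofReal (‖(r : ℂ) * cexp (θ * I)‖ ^ q)
      = ∫⁻ r in Ioo (0 : ℝ) 1, ENNReal.ofReal (2 * π) * ENNReal.ofReal (r ^ (q + 1)) := by
        refine setLIntegral_congr_fun measurableSet_Ioo fun r ⟨hr, _⟩ ↦ ?_
        simp_rw [norm_ofReal_mul_exp_mul_I hr.le, ← ENNReal.ofReal_mul hr.le, mul_comm r,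
          ← rpow_add_one hr.ne']
        rw [setLIntegral_const, Real.volume_Ioo, mul_comm]
        ring_nf
    _ = ENNReal.ofReal (2 * π / (q + 2)) := by
        rw [lintegral_const_mul' _ _ ENNReal.ofReal_ne_top,
          lintegral_Ioo_zero_one_rpow (by linarith),
          ← ENNReal.ofReal_mul (by positivity)]
        ring_nf

theorem integral_exp_int_mul_I {m : ℤ} (hm : m ≠ 0) :
    ∫ θ in Ioo (-π) π, cexp (m * θ * I) = 0 := by
  have hmI : (m : ℂ) * I ≠ 0 := mul_ne_zero (Int.cast_ne_zero.mpr hm) I_ne_zero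
  have hperiodic : ∀ x : ℂ, cexp (m * I * (x + 2 * π)) = cexp (m * I * x) := fun x ↦ by
    rw [mul_add, Complex.exp_add, show (m : ℂ) * I * (2 * π) = m * (2 * π * I) by ring,
      Complex.exp_int_mul_two_pi_mul_I, mul_one]
  rw [← integral_Ioc_eq_integral_Ioo, ← intervalIntegral.integral_of_le (by linarith [pi_pos])]
  simp_rw [mul_comm _ I, ← mul_assoc, mul_comm I, integral_exp_mul_complex hmI]
  push_cast
  rw [show (m : ℂ) * I * π = m * I * (-π + 2 * π) by ring, hperiodic, sub_self, zero_div]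

theorem two_pi_mul_norm_mul_zpow_le_integral {g : ℂ → ℂ} {a : ℤ → ℂ} {r : ℝ} (hr : 0 < r)
    (hsum : ∀ θ : ℝ, HasSum (fun j ↦ a j * (r * cexp (θ * I)) ^ j) (g (r * cexp (θ * I))))
    (k : ℤ) :
    2 * π * ‖a k‖ * r ^ k ≤ ∫ θ in Ioo (-π) π, ‖g (r * cexp (θ * I))‖ := by
  set F : ℤ → ℝ → ℂ := fun j θ ↦ a j * r ^ j * cexp ((j - k : ℤ) * θ * I)
  have hF : ∀ θ : ℝ, HasSum (F · θ) (g (r * cexp (θ * I)) * cexp (-k * θ * I)) := fun θ ↦ by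
    have hterm : ∀ j, F j θ = a j * (r * cexp (θ * I)) ^ j * cexp (-k * θ * I) := fun j ↦ by
      simp only [F, mul_zpow, ← Complex.exp_int_mul, mul_assoc, ← Complex.exp_add]
      push_cast
      ring_nf
    simpa only [hterm] using (hsum θ).mul_right (cexp (-k * θ * I))
  have hnorm : ∀ j θ, ‖F j θ‖ = ‖a j * r ^ j‖ := fun j θ ↦ by
    simp only [F, norm_mul]
    norm_cast
    rw [norm_exp_ofReal_mul_I, mul_one]
  have hint : ∀ j, Integrable (F j) (volume.restrict (Ioo (-π) π)) := fun j ↦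
    (by fun_prop : Continuous (F j)).integrableOn_Icc.mono_set Ioo_subset_Icc_self
  have hsummable : Summable fun j ↦ ∫ θ in Ioo (-π) π, ‖F j θ‖ := by
    simp_rw [hnorm, integral_const]
    exact (summable_norm_iff.mpr (by simpa using (hsum 0).summable)).const_smul _
  have hcoeff : ∫ θ in Ioo (-π) π, g (r * cexp (θ * I)) * cexp (-k * θ * I) =
      a k * r ^ k * (2 * π) := by
    simp_rw [← (hF _).tsum_eq]
    rw [← integral_tsum_of_summable_integral_norm hint hsummable, tsum_eq_single k]
    · simp only [F, sub_self, Int.cast_zero, zero_mul, Complex.exp_zero, mul_one, setIntegral_const,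
        Real.volume_real_Ioo_of_le (by linarith [pi_pos] : -π ≤ π), real_smul]
      push_cast
      ring
    · intro j hj
      rw [integral_const_mul, integral_exp_int_mul_I (sub_ne_zero.mpr hj), mul_zero]
  calc 2 * π * ‖a k‖ * r ^ k
      = ‖∫ θ in Ioo (-π) π, g (r * cexp (θ * I)) * cexp (-k * θ * I)‖ := by
        simp only [hcoeff, Complex.norm_mul, norm_zpow, norm_real, norm_eq_abs, abs_of_pos hr,
          Complex.norm_ofNat, abs_of_pos pi_pos]
        ring
    _ ≤ ∫ θ in Ioo (-π) π, ‖g (r * cexp (θ * I)) * cexp (-k * θ * I)‖ :=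
        norm_integral_le_integral_norm _
    _ = ∫ θ in Ioo (-π) π, ‖g (r * cexp (θ * I))‖ := by
        congr 1 with θ
        rw [norm_mul]
        norm_cast
        rw [norm_exp_ofReal_mul_I, mul_one]

theorem ofReal_integral_norm_le_lintegral {α E : Type*} [MeasurableSpace α] {μ : Measure α}
    [NormedAddCommGroup E] (f : α → E) :
    ENNReal.ofReal (∫ x, ‖f x‖ ∂μ) ≤ ∫⁻ x, ‖f x‖ₑ ∂μ := by
  simpa only [Real.enorm_eq_ofReal (integral_nonneg fun x ↦ norm_nonneg (f x)), enorm_norm]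
    using enorm_integral_le_lintegral_enorm (μ := μ) (fun x ↦ ‖f x‖)

theorem ofReal_norm_laurentCoeff_le_setLIntegral {g : ℂ → ℂ} {a : ℤ → ℂ} (hg : ContinuousOn g puncturedUnitDisc)
    (hsum : ∀ z ∈ puncturedUnitDisc, HasSum (fun j ↦ a j * z ^ j) (g z)) {k : ℤ} (hk : k ≤ 1) :
    ENNReal.ofReal ‖a k‖ ≤ ∫⁻ z in puncturedUnitDisc, ENNReal.ofReal (‖g z‖ * ‖z‖ ^ 2) := by
  have hmeas :
      Measurable (puncturedUnitDisc.indicator fun z ↦ ENNReal.ofReal (‖g z‖ * ‖z‖ ^ 2)) := by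
    classical
    refine ContinuousOn.measurable_piecewise ?_ continuousOn_const
      isOpen_puncturedUnitDisc.measurableSet
    exact ENNReal.continuous_ofReal.comp_continuousOn (by fun_prop)
  have hcircle : ∀ r ∈ Ioo (0 : ℝ) 1, ENNReal.ofReal (2 * π * ‖a k‖ * r ^ (4 : ℝ)) ≤
      ∫⁻ θ in Ioo (-π) π, ENNReal.ofReal r *
        ENNReal.ofReal (‖g (r * cexp (θ * I))‖ * ‖(r : ℂ) * cexp (θ * I)‖ ^ 2) := by
    intro r ⟨hr0, hr1⟩
    have hrk : r ≤ r ^ k := by simpa using zpow_le_zpow_right_of_le_one₀ hr0 hr1.le hk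
    have hcauchy := two_pi_mul_norm_mul_zpow_le_integral hr0
      (fun θ ↦ hsum _ ((ofReal_mul_exp_mem_puncturedUnitDisc_iff hr0 θ).2 hr1)) k
    calc ENNReal.ofReal (2 * π * ‖a k‖ * r ^ (4 : ℝ))
        ≤ ENNReal.ofReal (r ^ 3) *
            ENNReal.ofReal (∫ θ in Ioo (-π) π, ‖g (r * cexp (θ * I))‖) := by
          rw [← ENNReal.ofReal_mul (by positivity)]
          refine ENNReal.ofReal_le_ofReal ?_
          calc 2 * π * ‖a k‖ * r ^ (4 : ℝ) = r ^ 3 * (2 * π * ‖a k‖ * r) := by norm_num; ring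
            _ ≤ r ^ 3 * (2 * π * ‖a k‖ * r ^ k) := by gcongr
            _ ≤ _ := by gcongr
      _ ≤ ENNReal.ofReal (r ^ 3) * ∫⁻ θ in Ioo (-π) π, ‖g (r * cexp (θ * I))‖ₑ := by
          gcongr
          exact ofReal_integral_norm_le_lintegral _
      _ = _ := by
          rw [← lintegral_const_mul' _ _ ENNReal.ofReal_ne_top]
          congr 1 with θ
          rw [← ofReal_norm, norm_ofReal_mul_exp_mul_I hr0.le, ← ENNReal.ofReal_mul hr0.le,
            ← ENNReal.ofReal_mul (by positivity)]
          ring_nf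
  calc ENNReal.ofReal ‖a k‖ ≤ ENNReal.ofReal (2 * π * ‖a k‖ * (1 / (4 + 1))) := by
        gcongr
        nlinarith [pi_gt_three, norm_nonneg (a k)]
    _ = ∫⁻ r in Ioo (0 : ℝ) 1, ENNReal.ofReal (2 * π * ‖a k‖ * r ^ (4 : ℝ)) := by
        simp_rw [ENNReal.ofReal_mul (by positivity : 0 ≤ 2 * π * ‖a k‖)]
        rw [lintegral_const_mul' _ _ ENNReal.ofReal_ne_top,
          lintegral_Ioo_zero_one_rpow (by norm_num)]
    _ ≤ _ := by
        rw [setLIntegral_puncturedUnitDisc hmeas]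
        exact setLIntegral_mono' measurableSet_Ioo hcircle

theorem integrable_norm_mul_sq_of_sq_mul_sq {g : ℂ → ℂ}
    (hg : ContinuousOn g puncturedUnitDisc)
    (hg2 : Integrable (fun z ↦ ‖g z‖ ^ 2 * ‖z‖ ^ 2) (volume.restrict puncturedUnitDisc)) :
    Integrable (fun z ↦ ‖g z‖ * ‖z‖ ^ 2) (volume.restrict puncturedUnitDisc) := by
  have hfin : volume puncturedUnitDisc ≠ ⊤ :=
    measure_ne_top_of_subset (fun z hz ↦ mem_ball_zero_iff.mpr hz.2) measure_ball_lt_top.ne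
  refine ((integrableOn_const (C := (1 : ℝ)) hfin).add hg2).mono'
    ((hg.norm.mul (by fun_prop)).aestronglyMeasurable isOpen_puncturedUnitDisc.measurableSet)
    ((ae_restrict_iff' isOpen_puncturedUnitDisc.measurableSet).mpr (.of_forall fun z hz ↦ ?_))
  have hz : ‖z‖ ^ 2 ≤ ‖z‖ := by nlinarith [norm_nonneg z, hz.2]
  rw [Real.norm_of_nonneg (by positivity), Pi.add_apply]
  nlinarith [sq_nonneg (‖g z‖ * ‖z‖ - 1), mul_le_mul_of_nonneg_left hz (norm_nonneg (g z))]

/-- `F(g)`, written through the Laurent coefficients `a` of `g`. -/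
noncomputable def friedrichs (a : ℤ → ℂ) (z : ℂ) : ℂ :=
  starRingEnd ℂ (a 1) / 2 * z⁻¹ + starRingEnd ℂ (a 0) + 3 * starRingEnd ℂ (a (-1)) / 2 * z

theorem norm_friedrichs_le {a : ℤ → ℂ} {M : ℝ} (h_one : ‖a 1‖ ≤ M) (h_zero : ‖a 0‖ ≤ M)
    (h_neg : ‖a (-1)‖ ≤ M) {z : ℂ} (hz0 : z ≠ 0) (hz1 : ‖z‖ ≤ 1) :
    ‖friedrichs a z‖ ≤ 3 * M * ‖z‖⁻¹ := by
  have hM : 0 ≤ M := (norm_nonneg _).trans h_zero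
  have hinv : 1 ≤ ‖z‖⁻¹ := one_le_inv₀ (norm_pos_iff.mpr hz0) |>.mpr hz1
  calc ‖friedrichs a z‖ ≤ ‖a 1‖ / 2 * ‖z‖⁻¹ + ‖a 0‖ + 3 * ‖a (-1)‖ / 2 * ‖z‖ := by
        refine (norm_add₃_le ..).trans_eq ?_
        simp
    _ ≤ M / 2 * ‖z‖⁻¹ + M * ‖z‖⁻¹ + 3 * M / 2 * ‖z‖⁻¹ := by
        gcongr
        · exact h_zero.trans (le_mul_of_one_le_right hM hinv)
        · exact hz1.trans hinv
    _ = 3 * M * ‖z‖⁻¹ := by ring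

theorem lintegral_norm_friedrichs_rpow_le {a : ℤ → ℂ} {M p : ℝ} (h_one : ‖a 1‖ ≤ M)
    (h_zero : ‖a 0‖ ≤ M) (h_neg : ‖a (-1)‖ ≤ M) (hp0 : 0 < p) (hp4 : p < 4) :
    (∫⁻ z in puncturedUnitDisc, ENNReal.ofReal (‖friedrichs a z‖ ^ p * ‖z‖ ^ 2)) ^ (1 / p) ≤
      ENNReal.ofReal (3 * M * (2 * π / (4 - p)) ^ (1 / p)) := by
  have hM : 0 ≤ 3 * M := by linarith [(norm_nonneg _).trans h_zero]
  have hMp : 0 ≤ (3 * M) ^ p := rpow_nonneg hM p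
  have hvol : 0 ≤ 2 * π / (4 - p) := div_nonneg two_pi_pos.le (by linarith)
  have hpoint : ∀ z ∈ puncturedUnitDisc,
      ‖friedrichs a z‖ ^ p * ‖z‖ ^ 2 ≤ (3 * M) ^ p * ‖z‖ ^ (2 - p) := fun z ⟨hz0, hz1⟩ ↦ by
    calc ‖friedrichs a z‖ ^ p * ‖z‖ ^ 2 ≤ (3 * M * ‖z‖⁻¹) ^ p * ‖z‖ ^ (2 : ℝ) := by
          rw [rpow_two]
          gcongr
          exact norm_friedrichs_le h_one h_zero h_neg (norm_pos_iff.mp hz0) hz1.le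
      _ = (3 * M) ^ p * ‖z‖ ^ (2 - p) := by
          rw [mul_rpow hM (by positivity), inv_rpow hz0.le, rpow_sub hz0]
          ring
  calc (∫⁻ z in puncturedUnitDisc, ENNReal.ofReal (‖friedrichs a z‖ ^ p * ‖z‖ ^ 2)) ^ (1 / p)
      ≤ (∫⁻ z in puncturedUnitDisc,
          ENNReal.ofReal ((3 * M) ^ p) * ENNReal.ofReal (‖z‖ ^ (2 - p))) ^ (1 / p) := by
        gcongr ?_ ^ _
        refine setLIntegral_mono' isOpen_puncturedUnitDisc.measurableSet fun z hz ↦ ?_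
        rw [← ENNReal.ofReal_mul (by positivity)]
        exact ENNReal.ofReal_le_ofReal (hpoint z hz)
    _ = ENNReal.ofReal (3 * M * (2 * π / (4 - p)) ^ (1 / p)) := by
        rw [lintegral_const_mul' _ _ ENNReal.ofReal_ne_top,
          setLIntegral_puncturedUnitDisc_norm_rpow (by linarith), show 2 - p + 2 = 4 - p by ring,
          ← ENNReal.ofReal_mul hMp,
          ENNReal.ofReal_rpow_of_nonneg (mul_nonneg hMp hvol) (by positivity), mul_rpow hMp hvol,
          ← rpow_mul hM, mul_one_div_cancel hp0.ne', rpow_one]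

/-- `L¹ → L^p` bound for the Friedrichs operator on `A²(𝔻*, |z|²)`:
for each `p ∈ [2,4)` there is `C_p > 0` such that for every `g ∈ A²(𝔻*, |z|²)`
with Laurent coefficients `a_k` (`k ≥ -1`), the function
`F(g)(z) = (conj a₁/2) z⁻¹ + conj a₀ + (3 conj a₋₁/2) z` satisfies
`‖F(g)‖_{L^p(𝔻*, |z|² dA)} ≤ C_p ∫_{𝔻*} |g| |z|² dA`. -/
theorem stmt_15 (D : Set ℂ) (hD : D = {z : ℂ | 0 < ‖z‖ ∧ ‖z‖ < 1})
    (p : ℝ) (hp2 : 2 ≤ p) (hp4 : p < 4) :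
    ∃ C : ℝ, 0 < C ∧
      ∀ (g : ℂ → ℂ) (a : ℤ → ℂ),
        DifferentiableOn ℂ g D →
        Integrable (fun z => ‖g z‖ ^ 2 * ‖z‖ ^ 2) (volume.restrict D) →
        (∀ k : ℤ, k < -1 → a k = 0) →
        (∀ z ∈ D, HasSum (fun k : ℤ => a k * z ^ k) (g z)) →
        (∫⁻ z in D, ENNReal.ofReal
            (‖(starRingEnd ℂ) (a 1) / 2 * z⁻¹ + (starRingEnd ℂ) (a 0) +
              3 * (starRingEnd ℂ) (a (-1)) / 2 * z‖ ^ p * ‖z‖ ^ 2)) ^ (1 / p) ≤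
          ENNReal.ofReal (C * ∫ z in D, ‖g z‖ * ‖z‖ ^ 2) := by
  obtain rfl : D = puncturedUnitDisc := hD
  have h4p : 0 < 4 - p := by linarith
  refine ⟨3 * (2 * π / (4 - p)) ^ (1 / p), by positivity, fun g a hg hg2 _ hsum ↦ ?_⟩
  set I := ∫ z in puncturedUnitDisc, ‖g z‖ * ‖z‖ ^ 2
  have hcoeff : ∀ k ≤ 1, ‖a k‖ ≤ I := fun k hk ↦ by
    rw [← ENNReal.ofReal_le_ofReal_iff (integral_nonneg fun z ↦ by positivity),
      ofReal_integral_eq_lintegral_ofReal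
        (integrable_norm_mul_sq_of_sq_mul_sq hg.continuousOn hg2)
        (.of_forall fun z ↦ by positivity)]
    exact ofReal_norm_laurentCoeff_le_setLIntegral hg.continuousOn hsum hk
  calc _ ≤ ENNReal.ofReal (3 * I * (2 * π / (4 - p)) ^ (1 / p)) :=
        lintegral_norm_friedrichs_rpow_le (hcoeff 1 le_rfl) (hcoeff 0 zero_le_one)
          (hcoeff (-1) (by norm_num)) (by linarith) hp4
    _ = _ := by rw [mul_right_comm]
end

section
/- With F the Friedrichs operator on A²(𝔻*, |z|²), the square F² = F ∘ F satisfies F²(g)(z) = a₀ + (3/4) a₁ z for every g(z) = Σ_{n≥0} a_n z^n in A⁴(𝔻*, |z|²) (note no z^{-1} term occurs since 1/z ∉ L⁴(𝔻*, |z|² dA)), and consequently for every p ∈ [4, ∞] there is C_p with ‖F²(g)‖_{L^p(𝔻*,|z|²dA)} ≤ C_p ∫_{𝔻*} |g| |z|² dA. -/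
/-!
The formula for `F²` is a computation with conjugates. For the bounds, everything
reduces to `‖aₙ‖ ≤ ∫_{𝔻*} |g| |z|² dA` for `n = 0, 1`. The Cauchy estimate on the
circle `|z| = R` gives `2π ‖aₙ‖ Rⁿ ≤ ∫₀^{2π} |g(R e^{iθ})| dθ`; multiplying by `R³`
and integrating over `0 < R < 1` in polar coordinates gives
`2π ‖aₙ‖ / (n + 4) ≤ ∫_{𝔻*} |g| |z|² dA`, an integral that is finite because
`|g| ≤ 1 + |g|⁴`. Hence `|F²g| ≤ 2 ∫_{𝔻*} |g| |z|² dA` on `𝔻*`, and since the weight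
`|z|²` is at most `1` and `𝔻*` has area `π`, the `Lᵖ` norms are bounded too.
-/

open MeasureTheory Complex Real Metric Set
open scoped ENNReal

def annulus (a b : ℝ) : Set ℂ := {z | a < ‖z‖ ∧ ‖z‖ < b}

theorem isOpen_annulus (a b : ℝ) : IsOpen (annulus a b) :=
  (isOpen_lt continuous_const continuous_norm).inter (isOpen_lt continuous_norm continuous_const)

theorem measurableSet_annulus (a b : ℝ) : MeasurableSet (annulus a b) :=
  (isOpen_annulus a b).measurableSet

theorem annulus_subset_ball (a b : ℝ) : annulus a b ⊆ ball 0 b :=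
  fun _ hz => mem_ball_zero_iff.2 hz.2

theorem circleMap_mem_annulus {a b R : ℝ} (ha : 0 ≤ a) (hR : R ∈ Ioo a b) (θ : ℝ) :
    circleMap 0 R θ ∈ annulus a b := by
  rw [annulus, mem_ofPred_eq, norm_circleMap_zero, abs_of_pos (ha.trans_lt hR.1)]
  exact hR

theorem polarCoord_symm_mem_annulus_iff {a b : ℝ} {p : ℝ × ℝ} (hp : 0 < p.1) :
    Complex.polarCoord.symm p ∈ annulus a b ↔ p.1 ∈ Ioo a b := by
  rw [annulus, mem_ofPred_eq, Complex.norm_polarCoord_symm, abs_of_pos hp]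
  rfl

theorem polarCoord_symm_eq_circleMap (p : ℝ × ℝ) :
    Complex.polarCoord.symm p = circleMap 0 p.1 p.2 := by
  rw [Complex.polarCoord_symm_apply, circleMap_zero, Complex.exp_mul_I]
  push_cast
  ring

theorem lintegral_annulus_eq_lintegral_polar {a b : ℝ} (ha : 0 ≤ a) {f : ℂ → ℝ≥0∞}
    (hf : ContinuousOn f (annulus a b)) :
    ∫⁻ z in annulus a b, f z =
      ∫⁻ R in Ioo a b, ∫⁻ θ in Ioo (-π) π, ENNReal.ofReal R * f (circleMap 0 R θ) := by
  set S : Set (ℝ × ℝ) := Ioo a b ×ˢ Ioo (-π) π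
  have hS : MeasurableSet S := measurableSet_Ioo.prod measurableSet_Ioo
  have hST : S ⊆ polarCoord.target := by
    rw [polarCoord_target]
    exact prod_mono (fun R hR => ha.trans_lt hR.1) subset_rfl
  have hmeas : AEMeasurable (fun p : ℝ × ℝ => ENNReal.ofReal p.1 * f (circleMap 0 p.1 p.2))
      (volume.restrict S) := by
    refine measurable_fst.ennreal_ofReal.aemeasurable.mul (ContinuousOn.aemeasurable ?_ hS)
    exact hf.comp (by fun_prop) fun p hp => circleMap_mem_annulus ha hp.1 p.2
  have hcongr : ∀ p ∈ polarCoord.target,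
      ENNReal.ofReal p.1 • (annulus a b).indicator f (Complex.polarCoord.symm p) =
        S.indicator (fun p => ENNReal.ofReal p.1 * f (circleMap 0 p.1 p.2)) p := by
    intro p hp
    rw [polarCoord_target] at hp
    by_cases hR : p.1 ∈ Ioo a b
    · rw [indicator_of_mem ((polarCoord_symm_mem_annulus_iff hp.1).2 hR),
        indicator_of_mem (mk_mem_prod hR hp.2), smul_eq_mul, polarCoord_symm_eq_circleMap]
    · rw [indicator_of_notMem (mt (polarCoord_symm_mem_annulus_iff hp.1).1 hR),
        indicator_of_notMem (fun h => hR h.1), smul_zero]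
  rw [← lintegral_indicator (measurableSet_annulus a b),
    ← Complex.lintegral_comp_polarCoord_symm,
    setLIntegral_congr_fun polarCoord.open_target.measurableSet hcongr,
    lintegral_indicator hS, Measure.restrict_restrict hS, inter_eq_self_of_subset_left hST,
    Measure.volume_eq_prod, ← Measure.prod_restrict, lintegral_prod _ ?_]
  rwa [Measure.prod_restrict, ← Measure.volume_eq_prod]

theorem two_pi_mul_circleAverage_eq_setIntegral (f : ℂ → ℝ) (c : ℂ) (R : ℝ) :
    2 * π * circleAverage f c R = ∫ θ in Ioo (-π) π, f (circleMap c R θ) := by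
  have hper : Function.Periodic (fun θ => f (circleMap c R θ)) (2 * π) :=
    fun θ => by simp only [periodic_circleMap c R θ]
  rw [circleAverage_def, smul_eq_mul, ← mul_assoc, mul_inv_cancel₀ (by positivity), one_mul,
    ← integral_Ioc_eq_integral_Ioo, ← intervalIntegral.integral_of_le (by linarith [pi_pos]),
    ← zero_add (2 * π), ← hper.intervalIntegral_add_eq (-π) 0]
  ring_nf

theorem lintegral_Ioo_zero_pow {r : ℝ} (hr : 0 ≤ r) (m : ℕ) :
    ∫⁻ R in Ioo 0 r, ENNReal.ofReal (R ^ m) = ENNReal.ofReal (r ^ (m + 1) / (m + 1)) := by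
  rw [← ofReal_integral_eq_lintegral_ofReal
      ((continuous_pow m).integrableOn_Icc.mono_set Ioo_subset_Icc_self)
      ((ae_restrict_iff' measurableSet_Ioo).2 (ae_of_all _ fun R hR => pow_nonneg hR.1.le m)),
    ← integral_Ioc_eq_integral_Ioo, ← intervalIntegral.integral_of_le hr, integral_pow]
  simp

section PowerSeries

open FormalMultilinearSeries

variable {g : ℂ → ℂ} {a : ℕ → ℂ} {r : ℝ}

theorem ofReal_lt_radius_ofScalars
    (hsum : ∀ z ∈ annulus 0 r, HasSum (fun n => a n * z ^ n) (g z)) {R : ℝ} (hR : 0 ≤ R)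
    (hRr : R < r) : ENNReal.ofReal R < (ofScalars ℂ a).radius := by
  obtain ⟨R', hR'⟩ := exists_between hRr
  have hs : Summable fun n => ‖ofScalars ℂ a n‖ * (R'.toNNReal : ℝ) ^ n := by
    have := (summable_norm_iff.2 (hsum _ (circleMap_mem_annulus le_rfl
      ⟨hR.trans_lt hR'.1, hR'.2⟩ 0)).summable)
    simpa [ofScalars_norm, Real.coe_toNNReal _ (hR.trans hR'.1.le), norm_circleMap_zero,
      abs_of_nonneg (hR.trans hR'.1.le)] using this
  calc ENNReal.ofReal R < ENNReal.ofReal R' :=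
        (ENNReal.ofReal_lt_ofReal_iff (hR.trans_lt hR'.1)).2 hR'.1
    _ ≤ _ := le_radius_of_summable _ hs

theorem eqOn_sum_ofScalars (hsum : ∀ z ∈ annulus 0 r, HasSum (fun n => a n * z ^ n) (g z)) :
    EqOn (ofScalars ℂ a).sum g (annulus 0 r) := fun z hz => by
  simp only [FormalMultilinearSeries.sum, ofScalars_apply_eq, smul_eq_mul]
  exact (hsum z hz).tsum_eq

theorem norm_coeff_mul_pow_le_circleAverage
    (hsum : ∀ z ∈ annulus 0 r, HasSum (fun n => a n * z ^ n) (g z)) {R : ℝ} (hR : 0 < R)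
    (hRr : R < r) (n : ℕ) : ‖a n‖ * R ^ n ≤ circleAverage (fun z => ‖g z‖) 0 R := by
  set P := ofScalars ℂ a
  have hrad := ofReal_lt_radius_ofScalars hsum hR.le hRr
  have hP : HasFPowerSeriesOnBall P.sum P 0 P.radius :=
    P.hasFPowerSeriesOnBall (pos_of_gt hrad)
  have hdiff : DifferentiableOn ℂ P.sum (closedBall 0 R.toNNReal) := by
    refine hP.differentiableOn.mono fun z hz => ?_
    rw [mem_closedBall_zero_iff, Real.coe_toNNReal _ hR.le] at hz
    rw [mem_eball, edist_zero_right, ← ofReal_norm]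
    exact (ENNReal.ofReal_le_ofReal hz).trans_lt hrad
  have hcauchy : P = cauchyPowerSeries P.sum 0 R := by
    have h := (hdiff.hasFPowerSeriesOnBall (by simpa using hR)).hasFPowerSeriesAt
    rw [Real.coe_toNNReal _ hR.le] at h
    exact hP.hasFPowerSeriesAt.eq_formalMultilinearSeries h
  have hsphere : EqOn (fun z => ‖P.sum z‖) (fun z => ‖g z‖) (sphere 0 |R|) := fun z hz => by
    rw [mem_sphere_zero_iff_norm, abs_of_pos hR] at hz
    exact congrArg norm (eqOn_sum_ofScalars hsum ⟨hz ▸ hR, hz ▸ hRr⟩)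
  calc ‖a n‖ * R ^ n = ‖cauchyPowerSeries P.sum 0 R n‖ * R ^ n := by
        rw [← hcauchy, ofScalars_norm]
    _ ≤ circleAverage (fun z => ‖P.sum z‖) 0 R * |R|⁻¹ ^ n * R ^ n := by
        gcongr
        exact norm_cauchyPowerSeries_le _ _ _ _
    _ = circleAverage (fun z => ‖g z‖) 0 R := by
        rw [circleAverage_congr_sphere hsphere, abs_of_pos hR, mul_assoc, ← mul_pow,
          inv_mul_cancel₀ hR.ne', one_pow, mul_one]

theorem ofReal_two_pi_mul_norm_coeff_mul_pow_le (hg : ContinuousOn g (annulus 0 r))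
    (hsum : ∀ z ∈ annulus 0 r, HasSum (fun n => a n * z ^ n) (g z)) {R : ℝ}
    (hR : R ∈ Ioo 0 r) (n : ℕ) :
    ENNReal.ofReal (2 * π * (‖a n‖ * R ^ n)) ≤
      ∫⁻ θ in Ioo (-π) π, ENNReal.ofReal ‖g (circleMap 0 R θ)‖ := by
  have hcont : Continuous fun θ => ‖g (circleMap 0 R θ)‖ :=
    (hg.comp_continuous (continuous_circleMap 0 R) (circleMap_mem_annulus le_rfl hR)).norm
  rw [← ofReal_integral_eq_lintegral_ofReal (hcont.integrableOn_Icc.mono_set Ioo_subset_Icc_self)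
    (ae_of_all _ fun _ => norm_nonneg _),
    ← two_pi_mul_circleAverage_eq_setIntegral (fun z => ‖g z‖)]
  gcongr
  exact norm_coeff_mul_pow_le_circleAverage hsum hR.1 hR.2 n

theorem two_pi_mul_norm_coeff_mul_le_integral (hr : 0 ≤ r) (hg : ContinuousOn g (annulus 0 r))
    (hsum : ∀ z ∈ annulus 0 r, HasSum (fun n => a n * z ^ n) (g z)) {k : ℕ}
    (hint : IntegrableOn (fun z => ‖g z‖ * ‖z‖ ^ k) (annulus 0 r)) (n : ℕ) :
    2 * π * ‖a n‖ * (r ^ (n + k + 2) / (n + k + 2)) ≤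
      ∫ z in annulus 0 r, ‖g z‖ * ‖z‖ ^ k := by
  have hcont : ContinuousOn (fun z => ENNReal.ofReal (‖g z‖ * ‖z‖ ^ k)) (annulus 0 r) :=
    ENNReal.continuous_ofReal.comp_continuousOn
      (hg.norm.mul (continuous_norm.pow k).continuousOn)
  rw [← ENNReal.ofReal_le_ofReal_iff
      (setIntegral_nonneg (measurableSet_annulus 0 r) fun _ _ => by positivity),
    ofReal_integral_eq_lintegral_ofReal hint (ae_of_all _ fun _ => by positivity),
    lintegral_annulus_eq_lintegral_polar le_rfl hcont]
  calc ENNReal.ofReal (2 * π * ‖a n‖ * (r ^ (n + k + 2) / (n + k + 2)))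
      = ∫⁻ R in Ioo 0 r,
          ENNReal.ofReal (R ^ (k + 1)) * ENNReal.ofReal (2 * π * (‖a n‖ * R ^ n)) := by
        have hpoint : ∀ R ∈ Ioo 0 r,
            ENNReal.ofReal (R ^ (k + 1)) * ENNReal.ofReal (2 * π * (‖a n‖ * R ^ n)) =
              ENNReal.ofReal (2 * π * ‖a n‖) * ENNReal.ofReal (R ^ (n + k + 1)) :=
            fun R hR => by
          rw [← ENNReal.ofReal_mul (pow_nonneg hR.1.le _),
            ← ENNReal.ofReal_mul (by positivity)]
          ring_nf
        rw [setLIntegral_congr_fun measurableSet_Ioo hpoint,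
          lintegral_const_mul' _ _ ENNReal.ofReal_ne_top, lintegral_Ioo_zero_pow hr,
          ← ENNReal.ofReal_mul (by positivity)]
        push_cast
        ring_nf
    _ ≤ ∫⁻ R in Ioo 0 r, ∫⁻ θ in Ioo (-π) π,
          ENNReal.ofReal R *
            ENNReal.ofReal (‖g (circleMap 0 R θ)‖ * ‖circleMap 0 R θ‖ ^ k) := by
        refine setLIntegral_mono' measurableSet_Ioo fun R hR => ?_
        have hpoint : ∀ θ, ENNReal.ofReal R *
            ENNReal.ofReal (‖g (circleMap 0 R θ)‖ * ‖circleMap 0 R θ‖ ^ k) =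
              ENNReal.ofReal (R ^ (k + 1)) * ENNReal.ofReal ‖g (circleMap 0 R θ)‖ :=
            fun θ => by
          rw [norm_circleMap_zero, abs_of_pos hR.1, ← ENNReal.ofReal_mul hR.1.le,
            ← ENNReal.ofReal_mul (pow_nonneg hR.1.le (k + 1))]
          ring_nf
        simp_rw [hpoint]
        rw [lintegral_const_mul' _ _ ENNReal.ofReal_ne_top]
        gcongr
        exact ofReal_two_pi_mul_norm_coeff_mul_pow_le hg hsum hR n

end PowerSeries

theorem le_one_add_pow {t : ℝ} (ht : 0 ≤ t) {n : ℕ} (hn : n ≠ 0) : t ≤ 1 + t ^ n := by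
  rcases le_total t 1 with h | h
  · linarith [pow_nonneg ht n]
  · linarith [le_self_pow₀ h hn]

theorem MeasureTheory.Integrable.norm_mul_of_norm_pow_mul {α E : Type*} [MeasurableSpace α]
    [NormedAddCommGroup E] {μ : Measure α} {f : α → E} {w : α → ℝ} {n : ℕ}
    (hfw : Integrable (fun x => ‖f x‖ ^ n * w x) μ) (hn : n ≠ 0)
    (hf : AEStronglyMeasurable f μ) (hw : Integrable w μ) (hw0 : 0 ≤ᵐ[μ] w) :
    Integrable (fun x => ‖f x‖ * w x) μ := by
  refine (hw.add hfw).mono' (hf.norm.mul hw.aestronglyMeasurable) ?_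
  filter_upwards [hw0] with x (hx : 0 ≤ w x)
  rw [norm_mul, norm_norm, Real.norm_of_nonneg hx, Pi.add_apply]
  nlinarith [mul_le_mul_of_nonneg_right (le_one_add_pow (norm_nonneg (f x)) hn) hx]

theorem lintegral_norm_rpow_mul_rpow_one_div_le {α E : Type*} [MeasurableSpace α]
    [NormedAddCommGroup E] {μ : Measure α} {f : α → E} {w : α → ℝ} {M p : ℝ} (hp : 0 < p)
    (hM : 0 ≤ M) (hf : ∀ᵐ x ∂μ, ‖f x‖ ≤ M) (hw : ∀ᵐ x ∂μ, w x ≤ 1) :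
    (∫⁻ x, ENNReal.ofReal (‖f x‖ ^ p * w x) ∂μ) ^ (1 / p) ≤
      ENNReal.ofReal M * μ univ ^ (1 / p) := by
  calc (∫⁻ x, ENNReal.ofReal (‖f x‖ ^ p * w x) ∂μ) ^ (1 / p)
      ≤ (∫⁻ _, ENNReal.ofReal (M ^ p) ∂μ) ^ (1 / p) := by
        gcongr ?_ ^ _
        refine lintegral_mono_ae ?_
        filter_upwards [hf, hw] with x hfx hwx
        refine ENNReal.ofReal_le_ofReal ((mul_le_of_le_one_right (by positivity) hwx).trans ?_)
        gcongr
    _ = ENNReal.ofReal M * μ univ ^ (1 / p) := by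
        rw [lintegral_const, ENNReal.mul_rpow_of_nonneg _ _ (by positivity),
          ← ENNReal.ofReal_rpow_of_nonneg hM hp.le, ← ENNReal.rpow_mul,
          mul_one_div_cancel hp.ne', ENNReal.rpow_one]

theorem volume_annulus_zero_one_le : volume (annulus 0 1) ≤ ENNReal.ofReal π := by
  calc volume (annulus 0 1) ≤ volume (ball (0 : ℂ) 1) :=
        measure_mono (annulus_subset_ball 0 1)
    _ = ENNReal.ofReal π := by
        rw [Complex.volume_ball, ← NNReal.coe_real_pi, ENNReal.ofReal_coe_nnreal]
        simp

section UnitDisk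

variable {g : ℂ → ℂ} {a : ℕ → ℂ}

theorem norm_coeff_le_integral (hg : ContinuousOn g (annulus 0 1))
    (hsum : ∀ z ∈ annulus 0 1, HasSum (fun n => a n * z ^ n) (g z))
    (hint : IntegrableOn (fun z => ‖g z‖ * ‖z‖ ^ 2) (annulus 0 1)) {n : ℕ} (hn : n ≤ 1) :
    ‖a n‖ ≤ ∫ z in annulus 0 1, ‖g z‖ * ‖z‖ ^ 2 := by
  have h := two_pi_mul_norm_coeff_mul_le_integral zero_le_one hg hsum hint n
  simp only [one_pow, Nat.cast_ofNat] at h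
  have hn' : (n : ℝ) + 2 + 2 ≤ 2 * π := by
    have : (n : ℝ) ≤ 1 := by exact_mod_cast hn
    linarith [pi_gt_three]
  refine le_trans ?_ h
  rw [mul_div_assoc', mul_one, le_div_iff₀ (by positivity)]
  nlinarith [mul_le_mul_of_nonneg_left hn' (norm_nonneg (a n))]

theorem norm_friedrichs_sq_le (hg : ContinuousOn g (annulus 0 1))
    (h4 : IntegrableOn (fun z => ‖g z‖ ^ 4 * ‖z‖ ^ 2) (annulus 0 1))
    (hsum : ∀ z ∈ annulus 0 1, HasSum (fun n => a n * z ^ n) (g z)) {z : ℂ} (hz : ‖z‖ ≤ 1) :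
    ‖a 0 + 3 / 4 * a 1 * z‖ ≤ 2 * ∫ z in annulus 0 1, ‖g z‖ * ‖z‖ ^ 2 := by
  have hweight : IntegrableOn (fun z : ℂ => ‖z‖ ^ 2) (annulus 0 1) :=
    ((continuous_norm.pow 2).continuousOn.integrableOn_compact (isCompact_closedBall 0 1)).mono_set
      ((annulus_subset_ball 0 1).trans ball_subset_closedBall)
  have hint : IntegrableOn (fun z => ‖g z‖ * ‖z‖ ^ 2) (annulus 0 1) :=
    h4.norm_mul_of_norm_pow_mul four_ne_zero
      (hg.aestronglyMeasurable (measurableSet_annulus 0 1)) hweight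
      (ae_of_all _ fun _ => by positivity)
  have h0 := norm_coeff_le_integral hg hsum hint zero_le_one
  have h1 := norm_coeff_le_integral hg hsum hint le_rfl
  calc ‖a 0 + 3 / 4 * a 1 * z‖ ≤ ‖a 0‖ + 3 / 4 * ‖a 1‖ * ‖z‖ := by
        refine (norm_add_le _ _).trans_eq ?_
        rw [norm_mul, norm_mul]
        norm_num
    _ ≤ 2 * ∫ z in annulus 0 1, ‖g z‖ * ‖z‖ ^ 2 := by
        nlinarith [norm_nonneg (a 1), norm_nonneg z]

theorem lintegral_friedrichs_sq_rpow_one_div_le (hg : ContinuousOn g (annulus 0 1))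
    (h4 : IntegrableOn (fun z => ‖g z‖ ^ 4 * ‖z‖ ^ 2) (annulus 0 1))
    (hsum : ∀ z ∈ annulus 0 1, HasSum (fun n => a n * z ^ n) (g z)) {p : ℝ} (hp : 1 ≤ p) :
    (∫⁻ z in annulus 0 1, ENNReal.ofReal (‖a 0 + 3 / 4 * a 1 * z‖ ^ p * ‖z‖ ^ 2)) ^ (1 / p) ≤
      ENNReal.ofReal (2 * π * ∫ z in annulus 0 1, ‖g z‖ * ‖z‖ ^ 2) := by
  set I := ∫ z in annulus 0 1, ‖g z‖ * ‖z‖ ^ 2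
  have hI : 0 ≤ I := setIntegral_nonneg (measurableSet_annulus 0 1) fun _ _ => by positivity
  have hvol : volume (annulus 0 1) ^ (1 / p) ≤ ENNReal.ofReal π :=
    calc volume (annulus 0 1) ^ (1 / p) ≤ ENNReal.ofReal π ^ (1 / p) := by
          gcongr
          exact volume_annulus_zero_one_le
      _ ≤ ENNReal.ofReal π ^ (1 : ℝ) :=
          ENNReal.rpow_le_rpow_of_exponent_le
            (ENNReal.one_le_ofReal.2 (by linarith [pi_gt_three]))
            (by rw [div_le_one (by linarith)]; exact hp)
      _ = ENNReal.ofReal π := ENNReal.rpow_one _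
  calc _ ≤ ENNReal.ofReal (2 * I) * volume (annulus 0 1) ^ (1 / p) := by
        rw [← Measure.restrict_apply_univ]
        refine lintegral_norm_rpow_mul_rpow_one_div_le (by linarith) (by positivity) ?_ ?_
        all_goals refine ae_restrict_of_forall_mem (measurableSet_annulus 0 1) fun z hz => ?_
        · exact norm_friedrichs_sq_le hg h4 hsum hz.2.le
        · exact pow_le_one₀ (norm_nonneg z) hz.2.le
    _ ≤ ENNReal.ofReal (2 * I) * ENNReal.ofReal π := by gcongr
    _ = ENNReal.ofReal (2 * π * I) := by
        rw [← ENNReal.ofReal_mul (by positivity)]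
        ring_nf

end UnitDisk

/-- The square of the Friedrichs operator on `A⁴(𝔻*, |z|²)`. For
`g(z) = Σ_{n≥0} a_n z^n` in `A⁴(𝔻*, |z|²)` (no `z⁻¹` term occurs since
`1/z ∉ L⁴(𝔻*, |z|² dA)`), applying the Friedrichs rule
`h ↦ (conj b₁/2) z⁻¹ + conj b₀ + (3 conj b₋₁/2) z` twice gives
`F²(g)(z) = a₀ + (3/4) a₁ z`, and for every `p ∈ [4, ∞)` (and `p = ∞`)
`‖F²(g)‖_{L^p(𝔻*, |z|² dA)} ≤ C_p ∫_{𝔻*} |g| |z|² dA`. -/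
theorem stmt_16 (D : Set ℂ) (hD : D = {z : ℂ | 0 < ‖z‖ ∧ ‖z‖ < 1}) :
    -- the composition formula: the coefficients of F(g) are b₋₁ = conj a₁ / 2,
    -- b₀ = conj a₀, b₁ = (3/2)·conj a₋₁ = 0, and applying F once more yields
    -- F²(g)(z) = a₀ + (3/4) a₁ z
    (∀ (a : ℕ → ℂ) (z : ℂ),
      (starRingEnd ℂ) ((3 / 2 : ℂ) * (starRingEnd ℂ) 0) / 2 * z⁻¹ +
          (starRingEnd ℂ) ((starRingEnd ℂ) (a 0)) +
          3 * (starRingEnd ℂ) ((starRingEnd ℂ) (a 1) / 2) / 2 * z =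
        a 0 + (3 / 4 : ℂ) * a 1 * z) ∧
    -- the L^p bounds, 4 ≤ p < ∞
    (∀ p : ℝ, 4 ≤ p → ∃ C : ℝ, 0 < C ∧
      ∀ (g : ℂ → ℂ) (a : ℕ → ℂ),
        DifferentiableOn ℂ g D →
        Integrable (fun z => ‖g z‖ ^ 4 * ‖z‖ ^ 2) (volume.restrict D) →
        (∀ z ∈ D, HasSum (fun n : ℕ => a n * z ^ n) (g z)) →
        (∫⁻ z in D, ENNReal.ofReal
            (‖a 0 + (3 / 4 : ℂ) * a 1 * z‖ ^ p * ‖z‖ ^ 2)) ^ (1 / p) ≤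
          ENNReal.ofReal (C * ∫ z in D, ‖g z‖ * ‖z‖ ^ 2)) ∧
    -- the sup-norm bound, p = ∞
    (∃ C : ℝ, 0 < C ∧
      ∀ (g : ℂ → ℂ) (a : ℕ → ℂ),
        DifferentiableOn ℂ g D →
        Integrable (fun z => ‖g z‖ ^ 4 * ‖z‖ ^ 2) (volume.restrict D) →
        (∀ z ∈ D, HasSum (fun n : ℕ => a n * z ^ n) (g z)) →
        ∀ z ∈ D, ‖a 0 + (3 / 4 : ℂ) * a 1 * z‖ ≤
          C * ∫ z in D, ‖g z‖ * ‖z‖ ^ 2) := by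
  obtain rfl : D = annulus 0 1 := hD
  refine ⟨fun a z => ?_,
    fun p hp => ⟨2 * π, by positivity, fun g a hg h4 hsum =>
      lintegral_friedrichs_sq_rpow_one_div_le hg.continuousOn h4 hsum (by linarith)⟩,
    ⟨2, two_pos, fun g a hg h4 hsum z hz =>
      norm_friedrichs_sq_le hg.continuousOn h4 hsum hz.2.le⟩⟩
  simp only [map_zero, mul_zero, zero_div, zero_mul, zero_add, conj_conj, map_div₀, map_ofNat]
  ring
end
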